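/- Let R be a commutative ring, n, m, k, l natural numbers with m ≤ n and k ≤ l ≤ n, and B an n × n matrix over R such that B i j = 0 whenever i < m and j ≥ l, and B i j = 0 whenever i ≥ m and j < k. Then det(B) equals the sum, over all subsets T of {0, …, n−1} of cardinality m satisfying {0, …, k−1} ⊆ T ⊆ {0, …, l−1}, of (−1)^(m(m−1)/2 + Σ_{j∈T} j) · det(B[{0,…,m−1}, T]) · det(B[{m,…,n−1}, Tᶜ]). (The paper's Lemma 1: the only column subsets contributing to the Laplace expansion are those containing all of the first k columns and contained in the first l columns.) -/

import Mathlib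

/-!
Sort the permutations in `det B = ∑ σ, sign σ • ∏ i, B (σ i) i` by the set `T` of columns
that `σ` sends into the first `m` rows. Listing `T` and then `Tᶜ` increasingly, such a `σ` is
a pair `σ₁ ∈ Perm (Fin m)`, `σ₂ ∈ Perm (Fin (n - m))` composed with the shuffle of `Fin n`
putting the first `m` positions onto `T`, so the `T`-part of the sum is
`sign (shuffle) · det B[{0,…,m-1}, T] · det B[{m,…,n-1}, Tᶜ]`. The inversions of the shuffle
are the pairs `u < v` with `u ∉ T`, `v ∈ T`; there are `∑_{v ∈ T} (v - #{u ∈ T | u < v})` of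
them, which has the parity of `m(m-1)/2 + ∑_{j ∈ T} j`. Finally, a term vanishes as soon as
`T` contains a column that is zero in the first `m` rows (any `j ≥ l`) or misses a column that
is zero in the last `n - m` rows (any `j < k`).
-/

open Finset Equiv Matrix

variable {n m : ℕ}

def finSumFinSubEquiv (hm : m ≤ n) : Fin m ⊕ Fin (n - m) ≃ Fin n :=
  finSumFinEquiv.trans (finCongr (Nat.add_sub_cancel' hm))

@[simp]
lemma finSumFinSubEquiv_inl (hm : m ≤ n) (a : Fin m) :
    finSumFinSubEquiv hm (.inl a) = Fin.castLE hm a := by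
  ext; simp [finSumFinSubEquiv]

@[simp]
lemma finSumFinSubEquiv_inr (hm : m ≤ n) (b : Fin (n - m)) :
    finSumFinSubEquiv hm (.inr b) = ⟨m + b, by omega⟩ := by
  ext; simp [finSumFinSubEquiv]

namespace Finset

section LinearOrder

variable {α : Type*} [LinearOrder α] [LocallyFiniteOrderBot α]

lemma card_filter_mem_Iio_orderEmbOfFin (T : Finset α) (hT : #T = m) (a : Fin m) :
    #((Iio (T.orderEmbOfFin hT a)).filter (· ∈ T)) = a := by
  have : (Iio (T.orderEmbOfFin hT a)).filter (· ∈ T) =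
      (Iio a).map (T.orderEmbOfFin hT).toEmbedding := by
    ext x
    simp only [mem_filter, mem_Iio, mem_map]
    constructor
    · rintro ⟨hx, hxT⟩
      obtain ⟨b, rfl⟩ : x ∈ Set.range (T.orderEmbOfFin hT) := by rwa [range_orderEmbOfFin]
      exact ⟨b, by simpa using hx, rfl⟩
    · rintro ⟨b, hb, rfl⟩
      exact ⟨by simpa using hb, orderEmbOfFin_mem _ _ _⟩
  rw [this, card_map, Fin.card_Iio]

lemma sum_card_filter_mem_Iio (T : Finset α) :
    ∑ v ∈ T, #((Iio v).filter (· ∈ T)) = #T * (#T - 1) / 2 := by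
  have h := sum_map univ (T.orderEmbOfFin rfl).toEmbedding fun v => #((Iio v).filter (· ∈ T))
  rw [map_orderEmbOfFin_univ] at h
  simp only [h, RelEmbedding.coe_toEmbedding, card_filter_mem_Iio_orderEmbOfFin]
  rw [Fin.sum_univ_eq_sum_range (fun i => i), sum_range_id]

end LinearOrder

lemma card_compl_of_card_eq {T : Finset (Fin n)} (hT : #T = m) : #Tᶜ = n - m := by
  simp [card_compl, hT]

def sumComplEquiv (T : Finset (Fin n)) (hT : #T = m) : Fin m ⊕ Fin (n - m) ≃ Fin n :=
  (Equiv.sumCongr (T.orderIsoOfFin hT).toEquiv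
    ((Tᶜ.orderIsoOfFin (card_compl_of_card_eq hT)).toEquiv.trans
      (Equiv.subtypeEquivRight fun _ => mem_compl))).trans (Equiv.sumCompl (· ∈ T))

variable (T : Finset (Fin n)) (hT : #T = m)

@[simp]
lemma sumComplEquiv_inl (a : Fin m) : T.sumComplEquiv hT (.inl a) = T.orderEmbOfFin hT a := by
  simp [sumComplEquiv, ← coe_orderIsoOfFin_apply]

@[simp]
lemma sumComplEquiv_inr (b : Fin (n - m)) :
    T.sumComplEquiv hT (.inr b) = Tᶜ.orderEmbOfFin (card_compl_of_card_eq hT) b := by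
  simp [sumComplEquiv, ← coe_orderIsoOfFin_apply]

variable (hm : m ≤ n)

lemma lt_iff_of_sumComplEquiv_lt {x y : Fin m ⊕ Fin (n - m)}
    (hxy : T.sumComplEquiv hT x < T.sumComplEquiv hT y) :
    finSumFinSubEquiv hm x < finSumFinSubEquiv hm y ↔
      T.sumComplEquiv hT x ∈ T ∨ T.sumComplEquiv hT y ∉ T := by
  have hc (b : Fin (n - m)) : Tᶜ.orderEmbOfFin (card_compl_of_card_eq hT) b ∉ T :=
    mem_compl.1 (orderEmbOfFin_mem _ _ b)
  rcases x with a | a <;> rcases y with b | b <;>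
    simp only [sumComplEquiv_inl, sumComplEquiv_inr, finSumFinSubEquiv_inl, finSumFinSubEquiv_inr,
      OrderEmbedding.lt_iff_lt, orderEmbOfFin_mem, hc, or_false, not_false_eq_true, or_true,
      not_true_eq_false, iff_true, iff_false, Fin.lt_def, Fin.val_castLE] at hxy ⊢ <;> omega

def shufflePerm : Perm (Fin n) := (finSumFinSubEquiv hm).symm.trans (T.sumComplEquiv hT)

theorem sign_shufflePerm :
    Perm.sign (T.shufflePerm hT hm) = (-1) ^ (m * (m - 1) / 2 + ∑ j ∈ T, (j : ℕ)) := by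
  set σ := T.shufflePerm hT hm
  have hσ {u v : Fin n} (huv : u < v) : σ⁻¹ u < σ⁻¹ v ↔ u ∈ T ∨ v ∉ T := by
    simpa [σ, shufflePerm, Perm.inv_def] using lt_iff_of_sumComplEquiv_lt T hT hm
      (x := (T.sumComplEquiv hT).symm u) (y := (T.sumComplEquiv hT).symm v) (by simpa using huv)
  have hcol (v : Fin n) : ∏ u ∈ Iio v, (if σ⁻¹ u < σ⁻¹ v then 1 else -1 : ℤˣ) =
      if v ∈ T then (-1) ^ #((Iio v).filter (· ∉ T)) else 1 := by
    have (u) (hu : u ∈ Iio v) : (if σ⁻¹ u < σ⁻¹ v then 1 else -1 : ℤˣ) =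
        if u ∈ T ∨ v ∉ T then 1 else -1 := by
      simp only [hσ (mem_Iio.1 hu)]
    rw [prod_congr rfl this]
    split_ifs with hv <;> simp [hv, prod_ite]
  have hparity (v : Fin n) : ((-1) ^ #((Iio v).filter (· ∉ T)) : ℤˣ) =
      (-1) ^ (v : ℕ) * (-1) ^ #((Iio v).filter (· ∈ T)) := by
    rw [← Fin.card_Iio v, ← card_filter_add_card_filter_not (s := Iio v) (· ∈ T), pow_add,
      mul_right_comm, Int.units_mul_self, one_mul]
  rw [← Perm.sign_inv, Perm.sign_eq_prod_prod_Iio]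
  simp only [hcol, prod_ite_mem, univ_inter, hparity, prod_pow_eq_pow_sum, ← pow_add]
  rw [sum_add_distrib, sum_card_filter_mem_Iio, hT, add_comm]

end Finset

section Laplace

variable {R : Type*} [CommRing R]

def laplaceTerm (hm : m ≤ n) (B : Matrix (Fin n) (Fin n) R) (T : Finset (Fin n)) : R :=
  if hT : #T = m then
    (-1) ^ (m * (m - 1) / 2 + ∑ j ∈ T, (j : ℕ)) *
      (B.submatrix (Fin.castLE hm) (T.orderEmbOfFin hT)).det *
      (B.submatrix (fun i : Fin (n - m) => ⟨m + i, by omega⟩)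
        (Tᶜ.orderEmbOfFin (card_compl_of_card_eq hT))).det
  else 0

def laplacePerm (hm : m ≤ n)
    (x : {T : Finset (Fin n) // #T = m} × Perm (Fin m) × Perm (Fin (n - m))) : Perm (Fin n) :=
  (x.1.1.sumComplEquiv x.1.2).symm.trans ((x.2.1.sumCongr x.2.2).trans (finSumFinSubEquiv hm))

variable (hm : m ≤ n) (T : Finset (Fin n)) (hT : #T = m) (σ₁ : Perm (Fin m))
  (σ₂ : Perm (Fin (n - m)))

@[simp]
lemma laplacePerm_sumComplEquiv (s : Fin m ⊕ Fin (n - m)) :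
    laplacePerm hm (⟨T, hT⟩, σ₁, σ₂) (T.sumComplEquiv hT s) =
      finSumFinSubEquiv hm (Sum.map σ₁ σ₂ s) := by
  simp [laplacePerm]

lemma sign_laplacePerm : Perm.sign (laplacePerm hm (⟨T, hT⟩, σ₁, σ₂)) =
    Perm.sign (T.shufflePerm hT hm) * (Perm.sign σ₁ * Perm.sign σ₂) := by
  have : laplacePerm hm (⟨T, hT⟩, σ₁, σ₂) =
      (finSumFinSubEquiv hm).permCongr (σ₁.sumCongr σ₂) * (T.shufflePerm hT hm)⁻¹ := by
    ext j; simp [laplacePerm, shufflePerm, Perm.inv_def, Equiv.permCongr_apply]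
  rw [this, Perm.sign_mul, Perm.sign_inv, Perm.sign_permCongr, Perm.sign_sumCongr, mul_comm]

lemma image_laplacePerm_symm_castLE :
    univ.image (fun a => (laplacePerm hm (⟨T, hT⟩, σ₁, σ₂)).symm (Fin.castLE hm a)) = T := by
  have (a : Fin m) : (laplacePerm hm (⟨T, hT⟩, σ₁, σ₂)).symm (Fin.castLE hm a) =
      T.orderEmbOfFin hT (σ₁.symm a) := by
    rw [← finSumFinSubEquiv_inl hm, Equiv.symm_apply_eq, ← sumComplEquiv_inl,
      laplacePerm_sumComplEquiv]
    simp
  simp only [this]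
  change univ.image (T.orderEmbOfFin hT ∘ σ₁.symm) = _
  rw [← image_image, image_univ_equiv, image_orderEmbOfFin_univ]

lemma laplacePerm_injective : Function.Injective (laplacePerm (n := n) hm) := by
  rintro ⟨⟨T, hT⟩, σ₁, σ₂⟩ ⟨⟨T', hT'⟩, σ₁', σ₂'⟩ h
  obtain rfl : T = T' := by
    rw [← image_laplacePerm_symm_castLE hm T hT σ₁ σ₂, h, image_laplacePerm_symm_castLE]
  have hmap (s) : Sum.map σ₁ σ₂ s = Sum.map σ₁' σ₂' s := by
    simpa using DFunLike.congr_fun h (T.sumComplEquiv hT s)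
  obtain rfl : σ₁ = σ₁' := Equiv.ext fun a => by simpa using hmap (.inl a)
  obtain rfl : σ₂ = σ₂' := Equiv.ext fun b => by simpa using hmap (.inr b)
  rfl

lemma laplacePerm_bijective : Function.Bijective (laplacePerm (n := n) hm) := by
  refine (Fintype.bijective_iff_injective_and_card _).2 ⟨laplacePerm_injective hm, ?_⟩
  simp only [Fintype.card_prod, Fintype.card_finset_len, Fintype.card_perm, Fintype.card_fin]
  rw [← mul_assoc, Nat.choose_mul_factorial_mul_factorial hm]

variable (B : Matrix (Fin n) (Fin n) R)

lemma sum_sign_smul_prod_laplacePerm :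
    ∑ σ₁, ∑ σ₂, Perm.sign (laplacePerm hm (⟨T, hT⟩, σ₁, σ₂)) •
      ∏ i, B (laplacePerm hm (⟨T, hT⟩, σ₁, σ₂) i) i = laplaceTerm hm B T := by
  rw [laplaceTerm, dif_pos hT, det_apply, det_apply, mul_assoc, sum_mul_sum, mul_sum]
  refine sum_congr rfl fun σ₁ _ => ?_
  rw [mul_sum]
  refine sum_congr rfl fun σ₂ _ => ?_
  rw [sign_laplacePerm, sign_shufflePerm, ← (T.sumComplEquiv hT).prod_comp,
    Fintype.prod_sum_type]
  simp only [laplacePerm_sumComplEquiv]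
  simp only [Sum.map_inl, Sum.map_inr, finSumFinSubEquiv_inl, finSumFinSubEquiv_inr,
    sumComplEquiv_inl, sumComplEquiv_inr, submatrix_apply, Units.smul_def, zsmul_eq_mul]
  push_cast
  ring

theorem det_eq_sum_laplaceTerm : B.det = ∑ T ∈ powersetCard m univ, laplaceTerm hm B T := by
  rw [det_apply, ← (laplacePerm_bijective hm).sum_comp, Fintype.sum_prod_type,
    sum_subtype (powersetCard m univ) (p := fun T => #T = m) (by simp [mem_powersetCard])]
  exact sum_congr rfl fun T _ => by
    rw [Fintype.sum_prod_type]; exact sum_sign_smul_prod_laplacePerm hm T.1 T.2 B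

lemma laplaceTerm_eq_zero_of_mem {T : Finset (Fin n)} {j : Fin n} (hj : j ∈ T)
    (hB : ∀ i : Fin n, (i : ℕ) < m → B i j = 0) : laplaceTerm hm B T = 0 := by
  rw [laplaceTerm]
  split_ifs with hT
  · obtain ⟨a, rfl⟩ : j ∈ Set.range (T.orderEmbOfFin hT) := by rwa [range_orderEmbOfFin]
    rw [det_eq_zero_of_column_eq_zero a fun i => hB _ (by simp), mul_zero, zero_mul]
  · rfl

lemma laplaceTerm_eq_zero_of_notMem {T : Finset (Fin n)} {j : Fin n} (hj : j ∉ T)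
    (hB : ∀ i : Fin n, m ≤ (i : ℕ) → B i j = 0) : laplaceTerm hm B T = 0 := by
  rw [laplaceTerm]
  split_ifs with hT
  · obtain ⟨b, rfl⟩ : j ∈ Set.range (Tᶜ.orderEmbOfFin (card_compl_of_card_eq hT)) := by
      rwa [range_orderEmbOfFin, coe_compl, Set.mem_compl_iff, mem_coe]
    rw [det_eq_zero_of_column_eq_zero b fun i => hB _ (by simp), mul_zero]
  · rfl

end Laplace

/-- **The paper's Lemma 1.** Let `B` be an `n × n` matrix over a commutative ring `R`,
`m ≤ n`, `k ≤ l ≤ n`, with `B i j = 0` whenever `i < m` and `j ≥ l`, and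
`B i j = 0` whenever `i ≥ m` and `j < k`.  Then in the Laplace expansion of `det B`
along the first `m` rows, only the column subsets `T` of cardinality `m` with
`{0, …, k-1} ⊆ T ⊆ {0, …, l-1}` contribute:
`det B = Σ_T (-1)^(m(m-1)/2 + Σ_{j∈T} j) · det B[{0,…,m-1}, T] · det B[{m,…,n-1}, Tᶜ]`. -/
theorem laplace_expansion_block (R : Type*) [CommRing R] (n m k l : ℕ) (hm : m ≤ n)
    (B : Matrix (Fin n) (Fin n) R)
    (htop : ∀ i j : Fin n, (i : ℕ) < m → l ≤ (j : ℕ) → B i j = 0)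
    (hbot : ∀ i j : Fin n, m ≤ (i : ℕ) → (j : ℕ) < k → B i j = 0) :
    B.det =
      ∑ T ∈ ((Finset.powersetCard m (Finset.univ : Finset (Fin n))).filter
          (fun T => (Finset.univ.filter (fun j : Fin n => (j : ℕ) < k)) ⊆ T ∧
            T ⊆ Finset.univ.filter (fun j : Fin n => (j : ℕ) < l))).attach,
        (-1 : R) ^ (m * (m - 1) / 2 + ∑ j ∈ T.1, (j : ℕ)) *
          (B.submatrix (Fin.castLE hm)
              (T.1.orderEmbOfFin
                ((Finset.mem_powersetCard.mp (Finset.mem_filter.mp T.2).1).2))).det *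
          (B.submatrix
              (fun i : Fin (n - m) => (⟨m + (i : ℕ), by have := i.isLt; omega⟩ : Fin n))
              ((T.1)ᶜ.orderEmbOfFin (by
                have h := (Finset.mem_powersetCard.mp (Finset.mem_filter.mp T.2).1).2
                simp [Finset.card_compl, h]))).det := by
  trans ∑ T ∈ (powersetCard m univ).filter (fun T =>
      univ.filter (fun j : Fin n => (j : ℕ) < k) ⊆ T ∧
        T ⊆ univ.filter (fun j : Fin n => (j : ℕ) < l)), laplaceTerm hm B T
  · rw [det_eq_sum_laplaceTerm hm, sum_filter_of_ne]
    intro T _ hT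
    refine ⟨fun j hj => ?_, fun j hj => ?_⟩
    · by_contra hjT
      exact hT (laplaceTerm_eq_zero_of_notMem hm B hjT fun i hi => hbot i j hi (mem_filter.1 hj).2)
    · by_contra hjl
      exact hT (laplaceTerm_eq_zero_of_mem hm B hj fun i hi => htop i j hi (by simpa using hjl))
  · rw [← sum_attach]
    exact sum_congr rfl fun T _ => by
      rw [laplaceTerm, dif_pos (mem_powersetCard.1 (mem_filter.1 T.2).1).2]
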